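/- Let G be a finite connected weighted graph, π: C_1(G,ℝ) → H_1(G,ℝ) the orthogonal projection, and e an edge. Define the Foster coefficient F(e) = ‖π(e)‖_sup (the maximum absolute value of the coefficients of π(e) in the edge basis). Then F(e) equals the diagonal coefficient a of e in π(e), and F(e) = (1/w(G)) · Σ_{T: e ∉ E(T)} w(T), i.e., the weighted fraction of spanning trees not containing e. -/

import Mathlib

/-- A finite weighted (multi)graph with a fixed orientation of the edges:
vertex type `V`, edge type `E`, tail/head maps and a positive length function. -/
structure WGraph where
  V : Type
  E : Type
  [fV : Fintype V]
  [fE : Fintype E]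
  [dV : DecidableEq V]
  [dE : DecidableEq E]
  tail : E → V
  head : E → V
  len : E → ℝ
  len_pos : ∀ e, 0 < len e

attribute [instance] WGraph.fV WGraph.fE WGraph.dV WGraph.dE

namespace WGraph

variable (G : WGraph)

/-- Two vertices are adjacent if some edge joins them (in either direction). -/
def Adj (x y : G.V) : Prop :=
  ∃ e, (G.tail e = x ∧ G.head e = y) ∨ (G.tail e = y ∧ G.head e = x)

/-- A weighted graph is connected if any two vertices are joined by a walk. -/
def Connected : Prop := ∀ x y : G.V, Relation.ReflTransGen G.Adj x y

/-- The differential `d : C_0(G,ℝ) → C_1(G,ℝ)`, `(df)(e) = (f(e⁺) - f(e⁻))/ℓ(e)`. -/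
noncomputable def d (f : G.V → ℝ) : G.E → ℝ :=
  fun e => (f (G.head e) - f (G.tail e)) / G.len e

/-- The adjoint `d* : C_1(G,ℝ) → C_0(G,ℝ)`,
`(d*α)(x) = Σ_{e⁺ = x} α(e) - Σ_{e⁻ = x} α(e)`. -/
def dStar (α : G.E → ℝ) : G.V → ℝ := fun x =>
  (∑ e ∈ Finset.univ.filter fun e => G.head e = x, α e) -
    ∑ e ∈ Finset.univ.filter fun e => G.tail e = x, α e

/-- The inner product `⟨α,β⟩ = Σ_e α(e) β(e) ℓ(e)` on real 1-chains. -/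
noncomputable def ip (α β : G.E → ℝ) : ℝ := ∑ e, α e * β e * G.len e

/-- Real 1-cycles: the kernel of `d*`. -/
def IsCycle (α : G.E → ℝ) : Prop := ∀ x, G.dStar α x = 0

/-- Exact 1-chains: the image of `d`. -/
def IsExact (α : G.E → ℝ) : Prop := ∃ f : G.V → ℝ, α = G.d f

/-- A 1-form `ω = Σ ω_e de` (recorded by its coefficients) is harmonic if at every
vertex the incoming and outgoing coefficients sum to the same value. -/
def Harmonic (ω : G.E → ℝ) : Prop :=
  ∀ x, (∑ e ∈ Finset.univ.filter fun e => G.head e = x, ω e) =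
    ∑ e ∈ Finset.univ.filter fun e => G.tail e = x, ω e

/-- Integration of the 1-form `ω` along the 1-chain `α`: `∫_α ω = Σ_e ω_e α(e) ℓ(e)`. -/
noncomputable def intPair (ω α : G.E → ℝ) : ℝ := ∑ e, ω e * α e * G.len e

/-- `d*` on integral 1-chains. -/
def dStarZ (α : G.E → ℤ) : G.V → ℤ := fun x =>
  (∑ e ∈ Finset.univ.filter fun e => G.head e = x, α e) -
    ∑ e ∈ Finset.univ.filter fun e => G.tail e = x, α e

/-- Integral 1-cycles. -/
def IsCycleZ (α : G.E → ℤ) : Prop := ∀ x, G.dStarZ α x = 0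

/-- `α ∈ im(d)_ℤ`: `α` is an integral 1-chain which is the differential of a real
function on the vertices (a function with integer slopes). -/
def IsExactZ (α : G.E → ℤ) : Prop :=
  ∃ f : G.V → ℝ, ∀ e, (α e : ℝ) = G.d f e

/-- The subgroup `H_1(G,ℤ) ⊕ im(d)_ℤ` of `C_1(G,ℤ)`, i.e. the subgroup generated by
integral cycles together with integral exact chains. -/
def jacRel : AddSubgroup (G.E → ℤ) :=
  AddSubgroup.closure {α | G.IsCycleZ α ∨ G.IsExactZ α}

/-- The Jacobian group of a weighted graph: `J(G) = C_1(G,ℤ)/(H_1(G,ℤ) ⊕ im(d)_ℤ)`. -/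
def Jac := (G.E → ℤ) ⧸ G.jacRel

noncomputable instance : AddCommGroup G.Jac :=
  inferInstanceAs (AddCommGroup ((G.E → ℤ) ⧸ G.jacRel))

/-- Divisors of degree zero. -/
def Div0 : AddSubgroup (G.V → ℤ) where
  carrier := {D | ∑ x, D x = 0}
  add_mem' := by
    intro a b ha hb
    simp only [Set.mem_setOf_eq] at *
    simp [Finset.sum_add_distrib, ha, hb]
  zero_mem' := by simp
  neg_mem' := by
    intro a ha
    simp only [Set.mem_setOf_eq] at *
    simp [ha]

/-- `d*` as a group homomorphism on integral 1-chains. -/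
def dStarZHom : (G.E → ℤ) →+ (G.V → ℤ) where
  toFun := G.dStarZ
  map_zero' := by funext x; simp [dStarZ]
  map_add' := by
    intro a b
    funext x
    simp [dStarZ, Finset.sum_add_distrib]
    ring

/-- The subgroup `im(d)_ℤ` of `C_1(G,ℤ)`. -/
def imdZ : AddSubgroup (G.E → ℤ) where
  carrier := {α | G.IsExactZ α}
  add_mem' := by
    rintro a b ⟨f, hf⟩ ⟨g, hg⟩
    exact ⟨f + g, fun e => by
      simp only [Pi.add_apply, Int.cast_add, hf e, hg e, d]; ring⟩
  zero_mem' := ⟨0, fun e => by simp [d]⟩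
  neg_mem' := by
    rintro a ⟨f, hf⟩
    exact ⟨-f, fun e => by
      simp only [Pi.neg_apply, Int.cast_neg, hf e, d]; ring⟩

/-- Principal divisors: `Prin(G) = d*(im(d)_ℤ)`. -/
def Prin : AddSubgroup (G.V → ℤ) := G.imdZ.map G.dStarZHom

lemma sum_dStarZ (α : G.E → ℤ) : ∑ x, G.dStarZ α x = 0 := by
  simp only [dStarZ, Finset.sum_sub_distrib]
  rw [Finset.sum_fiberwise, Finset.sum_fiberwise]
  simp

/-- The degree-zero Picard group `Pic(G) = Div⁰(G)/Prin(G)`. -/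
def PicZ := G.Div0 ⧸ (G.Prin.addSubgroupOf G.Div0)

noncomputable instance : AddCommGroup G.PicZ :=
  inferInstanceAs (AddCommGroup (G.Div0 ⧸ (G.Prin.addSubgroupOf G.Div0)))

/-- The weighted graph obtained by deleting the edge `e₀`. -/
def delEdge (e₀ : G.E) : WGraph where
  V := G.V
  E := {e : G.E // e ≠ e₀}
  tail := fun e => G.tail e.1
  head := fun e => G.head e.1
  len := fun e => G.len e.1
  len_pos := fun e => G.len_pos e.1

/-- An edge is a bridge if deleting it disconnects the graph. -/
def IsBridge (e₀ : G.E) : Prop := ¬ (G.delEdge e₀).Connected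

/-- The weighted graph obtained by deleting a vertex `z` (and all incident edges). -/
def delVertex (z : G.V) : WGraph where
  V := {x : G.V // x ≠ z}
  E := {e : G.E // G.tail e ≠ z ∧ G.head e ≠ z}
  tail := fun e => ⟨G.tail e.1, e.2.1⟩
  head := fun e => ⟨G.head e.1, e.2.2⟩
  len := fun e => G.len e.1
  len_pos := fun e => G.len_pos e.1

open scoped Classical in
/-- The (discrete) potential kernel: `jKer z y` is the function `f` with `f(z) = 0`
and `Δf = δ_y - δ_z` (when such a function exists; it is unique on a
connected graph). -/
noncomputable def jKer (z y : G.V) : G.V → ℝ :=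
  if h : ∃ f : G.V → ℝ, f z = 0 ∧ ∀ w, G.dStar (G.d f) w =
      (if w = y then 1 else 0) - (if w = z then 1 else 0)
  then h.choose else 0

/-- Connectivity using only the edges in `S`. -/
def ConnectedOn (S : Finset G.E) : Prop :=
  ∀ x y : G.V, Relation.ReflTransGen
    (fun a b => ∃ e ∈ S, (G.tail e = a ∧ G.head e = b) ∨ (G.tail e = b ∧ G.head e = a)) x y

/-- A spanning tree: a spanning connected edge set with `#V - 1` edges. -/
def IsSpanningTree (T : Finset G.E) : Prop :=
  G.ConnectedOn T ∧ T.card + 1 = Fintype.card G.V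

/-- The weight `w(T) = Π_{e ∉ T} ℓ(e)` of a spanning tree. -/
noncomputable def wt (T : Finset G.E) : ℝ := ∏ e ∈ Finset.univ \ T, G.len e

open scoped Classical in
/-- `w(G) = Σ_T w(T)`, summed over all spanning trees. -/
noncomputable def wG : ℝ := ∑ T : Finset G.E, if G.IsSpanningTree T then G.wt T else 0

open scoped Classical in
/-- The Foster coefficient `F(e) = (1/w(G)) Σ_{T : e ∉ T} w(T)`. -/
noncomputable def foster (e : G.E) : ℝ :=
  (1 / G.wG) * ∑ T : Finset G.E, if G.IsSpanningTree T ∧ e ∉ T then G.wt T else 0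

open scoped Classical in
/-- The fundamental cycle `α_{T,e}`: the unique 1-cycle supported on `T ∪ {e}` taking
the value `1` on `e`; by convention it is `0` when no such cycle exists
(e.g. when `e ∈ T`). -/
noncomputable def fundCycle (T : Finset G.E) (e : G.E) : G.E → ℝ :=
  if h : ∃ α : G.E → ℝ, G.IsCycle α ∧ α e = 1 ∧ ∀ f, f ∉ T → f ≠ e → α f = 0
  then h.choose else 0

end WGraph

/-!
Kirchhoff's formula: writing `α_{T,e}` for the fundamental cycle of `e` with respect to a
spanning tree `T` (zero when `e ∈ T`), the projection is `π(e) = (1/w(G)) Σ_T w(T) α_{T,e}`.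
The right side is a cycle, and it is orthogonal to `e - π(e)` against every cycle `γ` thanks to
the exchange symmetry `ℓ(j) Σ_T w(T) α_{T,e}(j) = ℓ(e) Σ_T w(T) α_{T,j}(e)`, which comes from
the bijection `T ↦ T + e - j` between the trees contributing to the two sides, together with the
expansion `γ = Σ_k γ(k) α_{T,k}` of a cycle in fundamental cycles. Since `α_{T,e}(e) = 1` for
`e ∉ T` and the coefficients of fundamental cycles lie in `{-1, 0, 1}`, the diagonal coefficient
is the weighted fraction of trees avoiding `e` and dominates all other coefficients.
-/

namespace WGraph

open Function Relation

variable {G : WGraph}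

def AdjOn (G : WGraph) (S : Finset G.E) (a b : G.V) : Prop :=
  ∃ e ∈ S, (G.tail e = a ∧ G.head e = b) ∨ (G.tail e = b ∧ G.head e = a)

instance {S : Finset G.E} : Std.Symm (G.AdjOn S) :=
  ⟨fun _ _ ⟨k, hk, h⟩ => ⟨k, hk, h.symm⟩⟩

theorem ConnectedOn.mono {S S' : Finset G.E} (hS : G.ConnectedOn S) (h : S ⊆ S') :
    G.ConnectedOn S' :=
  fun x y => ReflTransGen.mono
    (fun a b (hab : G.AdjOn S a b) => (hab.imp fun _ ⟨hk, h'⟩ => ⟨h hk, h'⟩ : G.AdjOn S' a b))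
    x y (hS x y)

theorem Connected.connectedOn_univ (hG : G.Connected) : G.ConnectedOn Finset.univ :=
  fun x y => ReflTransGen.mono
    (fun a b (hab : G.Adj a b) => (hab.imp fun _ h => ⟨Finset.mem_univ _, h⟩ : G.AdjOn _ a b))
    x y (hG x y)

theorem apply_eq_of_reflTransGen_adjOn {S : Finset G.E} {f : G.V → ℝ}
    (hf : ∀ k ∈ S, f (G.tail k) = f (G.head k)) {x y : G.V}
    (h : ReflTransGen (G.AdjOn S) x y) : f x = f y := by
  induction h with
  | refl => rfl
  | tail _ hstep ih =>
    obtain ⟨k, hk, ⟨rfl, rfl⟩ | ⟨rfl, rfl⟩⟩ := hstep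
    · rw [ih, hf k hk]
    · rw [ih, hf k hk]

theorem ConnectedOn.erase {S : Finset G.E} {j : G.E} (hS : G.ConnectedOn S)
    (hj : ReflTransGen (G.AdjOn (S.erase j)) (G.head j) (G.tail j)) :
    G.ConnectedOn (S.erase j) := by
  refine fun x y => ReflTransGen.lift' id (fun a b (hab : G.AdjOn S a b) => ?_) x y (hS x y)
  obtain ⟨k, hk, hab⟩ := hab
  change ReflTransGen (G.AdjOn (S.erase j)) a b
  by_cases hkj : k = j
  · subst hkj
    rcases hab with ⟨rfl, rfl⟩ | ⟨rfl, rfl⟩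
    · exact Std.Symm.symm _ _ hj
    · exact hj
  · exact .single ⟨k, Finset.mem_erase.2 ⟨hkj, hk⟩, hab⟩

noncomputable def dStarLin (G : WGraph) : (G.E → ℝ) →ₗ[ℝ] G.V → ℝ where
  toFun := G.dStar
  map_add' α β := by
    ext x
    simp only [dStar, Pi.add_apply, Finset.sum_add_distrib]
    ring
  map_smul' c α := by
    ext x
    simp only [dStar, Pi.smul_apply, smul_eq_mul, RingHom.id_apply, ← Finset.mul_sum, mul_sub]

noncomputable def cycles (G : WGraph) : Submodule ℝ (G.E → ℝ) := LinearMap.ker G.dStarLin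

theorem mem_cycles {α : G.E → ℝ} : α ∈ G.cycles ↔ G.IsCycle α :=
  LinearMap.mem_ker.trans funext_iff

theorem sum_dStar (α : G.E → ℝ) (A : Finset G.V) :
    ∑ x ∈ A, G.dStar α x =
      ∑ k, ((if G.head k ∈ A then α k else 0) - if G.tail k ∈ A then α k else 0) := by
  simp only [dStar, Finset.sum_sub_distrib]
  rw [Finset.sum_fiberwise_eq_sum_filter, Finset.sum_fiberwise_eq_sum_filter, Finset.sum_filter,
    Finset.sum_filter]

/-- A cycle through `j` carries flux across every cut separating the ends of `j`, so some
other edge of its support crosses the cut. -/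
theorem reflTransGen_adjOn_erase_of_mem_cycles {S : Finset G.E} {α : G.E → ℝ}
    (hα : α ∈ G.cycles) (hsupp : support α ⊆ S) {j : G.E} (hj : α j ≠ 0) :
    ReflTransGen (G.AdjOn (S.erase j)) (G.head j) (G.tail j) := by
  classical
  by_contra hc
  set A := Finset.univ.filter fun x => ReflTransGen (G.AdjOn (S.erase j)) (G.head j) x
  have hcross : ∀ k ≠ j,
      ((if G.head k ∈ A then α k else 0) - if G.tail k ∈ A then α k else 0) = 0 := by
    intro k hkj
    by_cases hk : α k = 0
    · simp [hk]
    have hkS : k ∈ S.erase j := Finset.mem_erase.2 ⟨hkj, hsupp hk⟩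
    have hA : G.head k ∈ A ↔ G.tail k ∈ A := by
      simp only [A, Finset.mem_filter, Finset.mem_univ, true_and]
      exact ⟨fun h => h.tail ⟨k, hkS, .inr ⟨rfl, rfl⟩⟩, fun h => h.tail ⟨k, hkS, .inl ⟨rfl, rfl⟩⟩⟩
    simp only [hA, sub_self]
  have hflux := sum_dStar α A
  rw [Finset.sum_eq_zero fun x _ => mem_cycles.1 hα x,
    Finset.sum_eq_single j (fun k _ => hcross k) (by simp)] at hflux
  simp [A, hc, ReflTransGen.refl] at hflux
  exact hj hflux.symm

theorem ConnectedOn.erase_of_mem_cycles {S : Finset G.E} {α : G.E → ℝ} (hS : G.ConnectedOn S)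
    (hα : α ∈ G.cycles) (hsupp : support α ⊆ S) {j : G.E} (hj : α j ≠ 0) :
    G.ConnectedOn (S.erase j) :=
  hS.erase (reflTransGen_adjOn_erase_of_mem_cycles hα hsupp hj)

theorem ConnectedOn.card_le [Nonempty G.V] {S : Finset G.E} (hS : G.ConnectedOn S) :
    Fintype.card G.V ≤ S.card + 1 := by
  let diff : (G.V → ℝ) →ₗ[ℝ] S → ℝ := LinearMap.pi fun k : S =>
    LinearMap.proj (R := ℝ) (φ := fun _ : G.V => ℝ) (G.tail k) - LinearMap.proj (G.head k)
  obtain ⟨x₀⟩ := ‹Nonempty G.V›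
  have hker : LinearMap.ker diff ≤ ℝ ∙ fun _ => 1 := fun f hf => by
    refine Submodule.mem_span_singleton.2 ⟨f x₀, funext fun y => ?_⟩
    have hf' : ∀ k ∈ S, f (G.tail k) = f (G.head k) := fun k hk =>
      sub_eq_zero.1 (congr_fun (LinearMap.mem_ker.1 hf) ⟨k, hk⟩)
    simpa using apply_eq_of_reflTransGen_adjOn hf' (hS x₀ y)
  have hrank := LinearMap.finrank_range_add_finrank_ker diff
  have hkerle := (Submodule.finrank_mono hker).trans (finrank_span_le_card _)
  have hrangele := Submodule.finrank_le (LinearMap.range diff)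
  simp only [Module.finrank_fintype_fun_eq_card, Fintype.card_coe, Set.toFinset_singleton,
    Finset.card_singleton] at hrank hkerle hrangele
  omega

theorem exists_mem_cycles_ne_zero [Nonempty G.V] {S : Finset G.E}
    (hS : Fintype.card G.V ≤ S.card) : ∃ α ∈ G.cycles, α ≠ 0 ∧ support α ⊆ S := by
  classical
  let extend : (S → ℝ) →ₗ[ℝ] G.E → ℝ :=
    LinearMap.pi fun k => if h : k ∈ S then LinearMap.proj ⟨k, h⟩ else 0
  let ψ := G.dStarLin ∘ₗ extend
  -- `d*` of any chain sums to zero over the vertices, so the constants are not in the range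
  have hrange : LinearMap.range ψ ≠ ⊤ := fun htop => by
    obtain ⟨a, ha⟩ : (fun _ => (1 : ℝ)) ∈ LinearMap.range ψ := htop ▸ Submodule.mem_top
    have hsum := sum_dStar (extend a) Finset.univ
    rw [show G.dStar (extend a) = ψ a from rfl, ha] at hsum
    simp at hsum
  have hrank := LinearMap.finrank_range_add_finrank_ker ψ
  have hlt := Submodule.finrank_lt hrange
  simp only [Module.finrank_fintype_fun_eq_card, Fintype.card_coe] at hrank hlt
  obtain ⟨a, ha, ha0⟩ := Submodule.exists_mem_ne_zero_of_ne_bot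
    (p := LinearMap.ker ψ) fun h => by rw [h, finrank_bot] at hrank; omega
  obtain ⟨k, hk⟩ := Function.ne_iff.1 ha0
  refine ⟨extend a, ha, Function.ne_iff.2 ⟨k, by simpa [extend] using hk⟩,
    support_subset_iff'.2 fun i (hi : i ∉ S) => by simp [extend, hi]⟩

theorem IsSpanningTree.eq_zero_of_mem_cycles {T : Finset G.E} (hT : G.IsSpanningTree T)
    {α : G.E → ℝ} (hα : α ∈ G.cycles) (hsupp : support α ⊆ T) : α = 0 := by
  have : Nonempty G.V := Fintype.card_pos_iff.1 (by have := hT.2; omega)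
  ext k
  by_contra hk
  have hcard := (hT.1.erase_of_mem_cycles hα hsupp hk).card_le
  rw [Finset.card_erase_of_mem (hsupp hk)] at hcard
  have := Finset.card_pos.2 ⟨k, hsupp hk⟩
  have := hT.2
  omega

theorem Connected.exists_isSpanningTree [Nonempty G.V] (hG : G.Connected) :
    ∃ T, G.IsSpanningTree T := by
  classical
  obtain ⟨S, hS, hmin⟩ := Finset.exists_min_image (Finset.univ.filter G.ConnectedOn)
    Finset.card ⟨_, Finset.mem_filter.2 ⟨Finset.mem_univ _, hG.connectedOn_univ⟩⟩
  simp only [Finset.mem_filter, Finset.mem_univ, true_and] at hS hmin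
  refine ⟨S, hS, le_antisymm ?_ hS.card_le⟩
  by_contra! hlt
  obtain ⟨α, hα, hα0, hsupp⟩ := exists_mem_cycles_ne_zero (Nat.lt_succ_iff.1 hlt)
  obtain ⟨k, hk⟩ := Function.ne_iff.1 hα0
  have hcard := hmin _ (hS.erase_of_mem_cycles hα hsupp hk)
  rw [Finset.card_erase_of_mem (hsupp hk)] at hcard
  have := Finset.card_pos.2 ⟨k, hsupp hk⟩
  omega

theorem dStarZ_single (k : G.E) :
    G.dStarZ (Pi.single k 1) = Pi.single (G.head k) 1 - Pi.single (G.tail k) 1 := by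
  ext x
  simp [dStarZ, Pi.single_apply, eq_comm]

theorem exists_dStarZ_eq_of_reflTransGen {S : Finset G.E} {x y : G.V}
    (h : ReflTransGen (G.AdjOn S) x y) :
    ∃ θ : G.E → ℤ, support θ ⊆ S ∧ G.dStarZ θ = Pi.single y 1 - Pi.single x 1 := by
  induction h with
  | refl => exact ⟨0, by simp, by rw [sub_self]; exact map_zero G.dStarZHom⟩
  | tail _ hstep ih =>
    obtain ⟨θ, hθS, hθ⟩ := ih
    obtain ⟨k, hk, hkab⟩ := hstep
    have hsingle : support (Pi.single k (1 : ℤ)) ⊆ S :=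
      Pi.support_single_subset.trans (Set.singleton_subset_iff.2 hk)
    rcases hkab with ⟨rfl, rfl⟩ | ⟨rfl, rfl⟩
    · refine ⟨θ + Pi.single k 1, (support_add _ _).trans (Set.union_subset hθS hsingle), ?_⟩
      rw [show G.dStarZ (θ + _) = G.dStarZ θ + G.dStarZ _ from map_add G.dStarZHom _ _, hθ,
        dStarZ_single]
      abel
    · refine ⟨θ - Pi.single k 1, (support_sub _ _).trans (Set.union_subset hθS hsingle), ?_⟩
      rw [show G.dStarZ (θ - _) = G.dStarZ θ - G.dStarZ _ from map_sub G.dStarZHom _ _, hθ,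
        dStarZ_single]
      abel

theorem intCast_mem_cycles {θ : G.E → ℤ} (hθ : G.IsCycleZ θ) :
    (fun k => (θ k : ℝ)) ∈ G.cycles :=
  mem_cycles.2 fun x => by
    have h := hθ x
    unfold dStarZ at h
    unfold dStar
    dsimp only
    exact_mod_cast h

theorem fundCycle_mem_cycles (T : Finset G.E) (e : G.E) : G.fundCycle T e ∈ G.cycles := by
  unfold fundCycle
  split_ifs with h
  · exact mem_cycles.2 h.choose_spec.1
  · exact zero_mem _

theorem support_fundCycle_subset (T : Finset G.E) (e : G.E) :
    support (G.fundCycle T e) ⊆ insert e T := by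
  refine support_subset_iff'.2 fun k hk => ?_
  simp only [Set.mem_insert_iff, Finset.mem_coe, not_or] at hk
  unfold fundCycle
  split_ifs with h
  · exact h.choose_spec.2.2 k hk.2 hk.1
  · rfl

/-- The integral fundamental cycle: `e` followed by a path in `T` back from its head to its
tail. -/
theorem IsSpanningTree.exists_isCycleZ {T : Finset G.E} (hT : G.IsSpanningTree T) {e : G.E}
    (he : e ∉ T) : ∃ θ : G.E → ℤ, G.IsCycleZ θ ∧ θ e = 1 ∧ support θ ⊆ insert e T := by
  obtain ⟨θ, hθT, hθ⟩ := exists_dStarZ_eq_of_reflTransGen (hT.1 (G.head e) (G.tail e))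
  have hθe : θ e = 0 := notMem_support.1 fun h => he (hθT h)
  refine ⟨Pi.single e 1 + θ, fun x => ?_, by simp [hθe], ?_⟩
  · rw [show G.dStarZ (_ + θ) = G.dStarZ _ + G.dStarZ θ from map_add G.dStarZHom _ _, hθ,
      dStarZ_single]
    simp
  · refine (support_add _ _).trans (Set.union_subset ?_ (hθT.trans ?_))
    · exact Pi.support_single_subset.trans (by simp)
    · simp

theorem IsSpanningTree.fundCycle_apply_self {T : Finset G.E} (hT : G.IsSpanningTree T)
    {e : G.E} (he : e ∉ T) : G.fundCycle T e e = 1 := by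
  obtain ⟨θ, hθ, hθe, hθT⟩ := hT.exists_isCycleZ he
  have hex : ∃ α : G.E → ℝ, G.IsCycle α ∧ α e = 1 ∧ ∀ f, f ∉ T → f ≠ e → α f = 0 :=
    ⟨fun k => (θ k : ℝ), mem_cycles.1 (intCast_mem_cycles hθ), by simp [hθe],
      fun f hfT hfe => by simpa using notMem_support.1 fun h => by simpa [hfT, hfe] using hθT h⟩
  rw [fundCycle, dif_pos hex]
  exact hex.choose_spec.2.1

theorem IsSpanningTree.fundCycle_eq_zero {T : Finset G.E} (hT : G.IsSpanningTree T) {e : G.E}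
    (he : e ∈ T) : G.fundCycle T e = 0 :=
  hT.eq_zero_of_mem_cycles (fundCycle_mem_cycles T e)
    (Set.insert_eq_of_mem (Finset.mem_coe.2 he) ▸ support_fundCycle_subset T e)

theorem IsSpanningTree.fundCycle_apply_self_eq {T : Finset G.E} (hT : G.IsSpanningTree T)
    (e : G.E) : G.fundCycle T e e = if e ∈ T then 0 else 1 := by
  split_ifs with he
  · simp [hT.fundCycle_eq_zero he]
  · exact hT.fundCycle_apply_self he

theorem IsSpanningTree.eq_fundCycle {T : Finset G.E} (hT : G.IsSpanningTree T) {e : G.E}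
    (he : e ∉ T) {α : G.E → ℝ} (hα : α ∈ G.cycles) (hαe : α e = 1)
    (hsupp : support α ⊆ insert e T) : α = G.fundCycle T e := by
  refine sub_eq_zero.1 (hT.eq_zero_of_mem_cycles (sub_mem hα (fundCycle_mem_cycles T e)) ?_)
  refine support_subset_iff'.2 fun k (hkT : k ∉ T) => ?_
  by_cases hke : k = e
  · simp [hke, hαe, hT.fundCycle_apply_self he]
  · have hk : k ∉ (insert e T : Set G.E) := by simp [hke, hkT]
    simp [notMem_support.1 fun h => hk (hsupp h),
      notMem_support.1 fun h => hk (support_fundCycle_subset T e h)]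

theorem IsSpanningTree.exists_intCast_eq_fundCycle {T : Finset G.E} (hT : G.IsSpanningTree T)
    (e : G.E) : ∃ θ : G.E → ℤ, G.fundCycle T e = fun k => (θ k : ℝ) := by
  by_cases he : e ∈ T
  · exact ⟨0, by simp [hT.fundCycle_eq_zero he]; rfl⟩
  obtain ⟨θ, hθ, hθe, hθT⟩ := hT.exists_isCycleZ he
  refine ⟨θ, (hT.eq_fundCycle he (intCast_mem_cycles hθ) (by simp [hθe]) ?_).symm⟩
  exact (support_comp_subset Int.cast_zero θ).trans hθT

theorem IsSpanningTree.notMem_of_fundCycle_ne_zero {T : Finset G.E} (hT : G.IsSpanningTree T)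
    {e j : G.E} (h : G.fundCycle T e j ≠ 0) : e ∉ T :=
  fun he => h (by simp [hT.fundCycle_eq_zero he])

theorem IsSpanningTree.exchange {T : Finset G.E} (hT : G.IsSpanningTree T) {e j : G.E}
    (h : G.fundCycle T e j ≠ 0) : G.IsSpanningTree ((insert e T).erase j) := by
  have hj : j ∈ insert e T := by simpa using support_fundCycle_subset T e h
  refine ⟨(hT.1.mono (Finset.subset_insert e T)).erase_of_mem_cycles
    (fundCycle_mem_cycles T e) (by simpa using support_fundCycle_subset T e) h, ?_⟩
  rw [Finset.card_erase_of_mem hj, Finset.card_insert_of_notMem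
    (hT.notMem_of_fundCycle_ne_zero h), ← hT.2, Nat.add_sub_cancel]

/-- Rescaling the fundamental cycle of `e` in `T` by its `j`-coefficient gives the fundamental
cycle of `j` in the exchanged tree, since both trees span the same set `T ∪ {e}`. -/
theorem IsSpanningTree.fundCycle_exchange_eq_inv {T : Finset G.E} (hT : G.IsSpanningTree T)
    {e j : G.E} (h : G.fundCycle T e j ≠ 0) :
    G.fundCycle ((insert e T).erase j) j e = (G.fundCycle T e j)⁻¹ := by
  have hj : j ∈ insert e T := by simpa using support_fundCycle_subset T e h
  have hsupp : support ((G.fundCycle T e j)⁻¹ • G.fundCycle T e) ⊆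
      insert j ((insert e T).erase j : Finset G.E) := by
    rw [← Finset.coe_insert, Finset.insert_erase hj, Finset.coe_insert]
    exact (support_const_smul_subset _ _).trans (support_fundCycle_subset T e)
  rw [← (hT.exchange h).eq_fundCycle (Finset.notMem_erase j _)
    (Submodule.smul_mem _ _ (fundCycle_mem_cycles T e)) (by simp [h]) hsupp]
  simp [hT.fundCycle_apply_self (hT.notMem_of_fundCycle_ne_zero h)]

/-- Coefficients of fundamental cycles are integers, so `x⁻¹ = y` forces `x = y`. -/
theorem IsSpanningTree.fundCycle_exchange {T : Finset G.E} (hT : G.IsSpanningTree T)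
    {e j : G.E} (h : G.fundCycle T e j ≠ 0) :
    G.fundCycle ((insert e T).erase j) j e = G.fundCycle T e j := by
  have hinv := hT.fundCycle_exchange_eq_inv h
  obtain ⟨θ, hθ⟩ := hT.exists_intCast_eq_fundCycle e
  obtain ⟨θ', hθ'⟩ := (hT.exchange h).exists_intCast_eq_fundCycle j
  simp only [hθ, hθ'] at hinv h ⊢
  have hmul : θ' e * θ j = 1 := by exact_mod_cast (mul_eq_one_iff_eq_inv₀ h).2 hinv
  exact_mod_cast Int.eq_of_mul_eq_one hmul

theorem IsSpanningTree.abs_fundCycle_le {T : Finset G.E} (hT : G.IsSpanningTree T)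
    (e j : G.E) : |G.fundCycle T e j| ≤ G.fundCycle T e e := by
  by_cases h : G.fundCycle T e j = 0
  · rw [h, abs_zero, hT.fundCycle_apply_self_eq]
    split_ifs <;> norm_num
  · have hinv := hT.fundCycle_exchange_eq_inv h
    rw [hT.fundCycle_exchange h, ← mul_eq_one_iff_eq_inv₀ h, ← abs_mul_self, abs_mul] at hinv
    rw [hT.fundCycle_apply_self (hT.notMem_of_fundCycle_ne_zero h)]
    nlinarith [abs_nonneg (G.fundCycle T e j)]

theorem IsSpanningTree.fundCycle_apply_of_notMem {T : Finset G.E} (hT : G.IsSpanningTree T)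
    {k : G.E} (hk : k ∉ T) (m : G.E) : G.fundCycle T m k = if m = k then 1 else 0 := by
  split_ifs with hmk
  · subst hmk
    exact hT.fundCycle_apply_self hk
  by_cases hm : m ∈ T
  · simp [hT.fundCycle_eq_zero hm]
  · exact notMem_support.1 fun h => by
      simpa [hk, Ne.symm hmk] using support_fundCycle_subset T m h

theorem IsSpanningTree.sum_smul_fundCycle {T : Finset G.E} (hT : G.IsSpanningTree T)
    {γ : G.E → ℝ} (hγ : γ ∈ G.cycles) : ∑ k, γ k • G.fundCycle T k = γ := by
  refine sub_eq_zero.1 (hT.eq_zero_of_mem_cycles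
    (sub_mem (sum_mem fun k _ => Submodule.smul_mem _ _ (fundCycle_mem_cycles T k)) hγ) ?_)
  refine support_subset_iff'.2 fun k (hk : k ∉ T) => ?_
  simp [Finset.sum_apply, hT.fundCycle_apply_of_notMem hk]

open scoped Classical in
noncomputable def spanningTrees (G : WGraph) : Finset (Finset G.E) :=
  Finset.univ.filter G.IsSpanningTree

@[simp]
theorem mem_spanningTrees {T : Finset G.E} : T ∈ G.spanningTrees ↔ G.IsSpanningTree T := by
  simp [spanningTrees]

open scoped Classical in
theorem wG_eq_sum : G.wG = ∑ T ∈ G.spanningTrees, G.wt T :=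
  (Finset.sum_filter _ _).symm

theorem wt_pos (T : Finset G.E) : 0 < G.wt T :=
  Finset.prod_pos fun k _ => G.len_pos k

theorem wG_nonneg : 0 ≤ G.wG :=
  wG_eq_sum (G := G) ▸ Finset.sum_nonneg fun T _ => (wt_pos T).le

theorem Connected.wG_pos [Nonempty G.V] (hG : G.Connected) : 0 < G.wG := by
  obtain ⟨T, hT⟩ := hG.exists_isSpanningTree
  rw [wG_eq_sum]
  exact Finset.sum_pos (fun T _ => wt_pos T) ⟨T, mem_spanningTrees.2 hT⟩

theorem wt_exchange {T : Finset G.E} {e j : G.E} (he : e ∉ T) (hj : j ∈ insert e T) :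
    G.wt ((insert e T).erase j) * G.len e = G.wt T * G.len j := by
  have hcompl : Finset.univ \ (insert e T).erase j = insert j ((Finset.univ \ T).erase e) := by
    ext k
    simp only [Finset.mem_sdiff, Finset.mem_erase, Finset.mem_insert, Finset.mem_univ, true_and]
    tauto
  have hj' : j ∉ (Finset.univ \ T).erase e := by
    simp only [Finset.mem_erase, Finset.mem_sdiff, Finset.mem_univ, true_and]
    simpa [or_iff_not_imp_left] using hj
  rw [wt, wt, hcompl, Finset.prod_insert hj', mul_assoc,
    Finset.prod_erase_mul _ _ (by simpa using he), mul_comm]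

theorem len_mul_sum_fundCycle_comm (e j : G.E) :
    G.len j * ∑ T ∈ G.spanningTrees, G.wt T * G.fundCycle T e j =
      G.len e * ∑ T ∈ G.spanningTrees, G.wt T * G.fundCycle T j e := by
  simp only [Finset.mul_sum]
  refine Finset.sum_bij_ne_zero (fun T _ _ => (insert e T).erase j) ?_ ?_ ?_ ?_
  · intro T hT h
    exact mem_spanningTrees.2 ((mem_spanningTrees.1 hT).exchange (right_ne_zero_of_mul
      (right_ne_zero_of_mul h)))
  · intro T₁ hT₁ h₁ T₂ hT₂ h₂ heq
    replace h₁ := right_ne_zero_of_mul (right_ne_zero_of_mul h₁)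
    replace h₂ := right_ne_zero_of_mul (right_ne_zero_of_mul h₂)
    have hj : ∀ {T}, G.fundCycle T e j ≠ 0 → j ∈ insert e T := fun h => by
      simpa using support_fundCycle_subset _ e h
    have := congr_arg (insert j) heq
    rw [Finset.insert_erase (hj h₁), Finset.insert_erase (hj h₂)] at this
    have := congr_arg (Finset.erase · e) this
    simpa [Finset.erase_insert ((mem_spanningTrees.1 hT₁).notMem_of_fundCycle_ne_zero h₁),
      Finset.erase_insert ((mem_spanningTrees.1 hT₂).notMem_of_fundCycle_ne_zero h₂)] using this
  · intro T' hT' h'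
    replace hT' := mem_spanningTrees.1 hT'
    replace h' := right_ne_zero_of_mul (right_ne_zero_of_mul h')
    have hfc := hT'.fundCycle_exchange h'
    refine ⟨(insert j T').erase e, mem_spanningTrees.2 (hT'.exchange h'),
      mul_ne_zero (G.len_pos j).ne' (mul_ne_zero (wt_pos _).ne' (hfc ▸ h')), ?_⟩
    have he : e ∈ insert j T' := by simpa using support_fundCycle_subset T' j h'
    rw [Finset.insert_erase he, Finset.erase_insert (hT'.notMem_of_fundCycle_ne_zero h')]
  · intro T hT h
    replace hT := mem_spanningTrees.1 hT
    replace h := right_ne_zero_of_mul (right_ne_zero_of_mul h)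
    have hj : j ∈ insert e T := by simpa using support_fundCycle_subset T e h
    rw [hT.fundCycle_exchange h]
    linear_combination (-G.fundCycle T e j) * wt_exchange (hT.notMem_of_fundCycle_ne_zero h) hj

/-- Kirchhoff's formula for `π(e)`. -/
noncomputable def kirchhoffChain (G : WGraph) (e : G.E) : G.E → ℝ :=
  G.wG⁻¹ • ∑ T ∈ G.spanningTrees, G.wt T • G.fundCycle T e

theorem kirchhoffChain_apply (e j : G.E) :
    G.kirchhoffChain e j = G.wG⁻¹ * ∑ T ∈ G.spanningTrees, G.wt T * G.fundCycle T e j := by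
  simp [kirchhoffChain, Finset.sum_apply]

theorem kirchhoffChain_mem_cycles (e : G.E) : G.kirchhoffChain e ∈ G.cycles :=
  Submodule.smul_mem _ _ (sum_mem fun T _ => Submodule.smul_mem _ _ (fundCycle_mem_cycles T e))

theorem ip_kirchhoffChain (hwG : G.wG ≠ 0) (e : G.E) {γ : G.E → ℝ} (hγ : γ ∈ G.cycles) :
    G.ip (G.kirchhoffChain e) γ = γ e * G.len e := by
  calc G.ip (G.kirchhoffChain e) γ
      = G.wG⁻¹ * ∑ k, γ k * (G.len k * ∑ T ∈ G.spanningTrees, G.wt T * G.fundCycle T e k) := by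
        simp only [ip, kirchhoffChain_apply, Finset.mul_sum, Finset.sum_mul]
        exact Finset.sum_congr rfl fun k _ => Finset.sum_congr rfl fun T _ => by ring
    _ = G.wG⁻¹ * ∑ k, γ k * (G.len e * ∑ T ∈ G.spanningTrees, G.wt T * G.fundCycle T k e) := by
        simp only [len_mul_sum_fundCycle_comm]
    _ = G.wG⁻¹ * G.len e * ∑ T ∈ G.spanningTrees, G.wt T * ∑ k, γ k * G.fundCycle T k e := by
        simp only [Finset.mul_sum]
        rw [Finset.sum_comm]
        exact Finset.sum_congr rfl fun T _ => Finset.sum_congr rfl fun k _ => by ring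
    _ = G.wG⁻¹ * G.len e * ∑ T ∈ G.spanningTrees, G.wt T * γ e := by
        refine congr_arg _ (Finset.sum_congr rfl fun T hT => ?_)
        have := congr_fun ((mem_spanningTrees.1 hT).sum_smul_fundCycle hγ) e
        simpa [Finset.sum_apply] using Or.inl this
    _ = γ e * G.len e := by
        rw [← Finset.sum_mul, ← wG_eq_sum]
        field_simp

theorem ip_sub_left (α β γ : G.E → ℝ) : G.ip (α - β) γ = G.ip α γ - G.ip β γ := by
  simp only [ip, Pi.sub_apply, sub_mul, Finset.sum_sub_distrib]

theorem eq_zero_of_ip_self_eq_zero {α : G.E → ℝ} (h : G.ip α α = 0) : α = 0 := by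
  ext k
  have := (Finset.sum_eq_zero_iff_of_nonneg fun k _ =>
    mul_nonneg (mul_self_nonneg (α k)) (G.len_pos k).le).1 h k (Finset.mem_univ k)
  simpa [(G.len_pos k).ne'] using this

theorem eq_of_forall_ip_sub_eq_zero {δ β μ : G.E → ℝ} (hβ : β ∈ G.cycles) (hμ : μ ∈ G.cycles)
    (hβδ : ∀ γ ∈ G.cycles, G.ip (δ - β) γ = 0) (hμδ : ∀ γ ∈ G.cycles, G.ip (δ - μ) γ = 0) :
    β = μ := by
  have hβμ := sub_mem hμ hβ
  have h := ip_sub_left (δ - β) (δ - μ) (μ - β)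
  rw [sub_sub_sub_cancel_left, hβδ _ hβμ, hμδ _ hβμ, sub_zero] at h
  exact (sub_eq_zero.1 (eq_zero_of_ip_self_eq_zero h)).symm

theorem ip_sub_kirchhoffChain (hwG : G.wG ≠ 0) (e : G.E) {γ : G.E → ℝ} (hγ : γ ∈ G.cycles) :
    G.ip ((fun j => if j = e then 1 else 0) - G.kirchhoffChain e) γ = 0 := by
  rw [ip_sub_left, ip_kirchhoffChain hwG e hγ, sub_eq_zero, ip, Finset.sum_eq_single e]
  · simp [mul_comm]
  · intro k _ hk
    simp [hk]
  · simp

theorem abs_kirchhoffChain_le (e j : G.E) : |G.kirchhoffChain e j| ≤ G.kirchhoffChain e e := by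
  rw [kirchhoffChain_apply, kirchhoffChain_apply, abs_mul, abs_of_nonneg (inv_nonneg.2 wG_nonneg)]
  refine mul_le_mul_of_nonneg_left ((Finset.abs_sum_le_sum_abs _ _).trans
    (Finset.sum_le_sum fun T hT => ?_)) (inv_nonneg.2 wG_nonneg)
  rw [abs_mul, abs_of_pos (wt_pos T)]
  exact mul_le_mul_of_nonneg_left ((mem_spanningTrees.1 hT).abs_fundCycle_le e j) (wt_pos T).le

open scoped Classical in
theorem kirchhoffChain_apply_self (e : G.E) :
    G.kirchhoffChain e e =
      1 / G.wG * ∑ T : Finset G.E, if G.IsSpanningTree T ∧ e ∉ T then G.wt T else 0 := by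
  rw [kirchhoffChain_apply, one_div, spanningTrees, Finset.sum_filter]
  refine congr_arg _ (Finset.sum_congr rfl fun T _ => ?_)
  split_ifs <;> simp_all [IsSpanningTree.fundCycle_apply_self_eq]

end WGraph

open scoped Classical in
/-- Let `β = π(δ_e)` be the orthogonal projection of the basis
1-chain of the edge `e` to the cycle space. The Foster coefficient
`F(e) = ‖π(e)‖_sup` is attained at the diagonal coefficient `β e`, and equals the
weighted fraction of spanning trees not containing `e`:
`F(e) = β e = (1/w(G)) Σ_{T : e ∉ T} w(T)`. -/
theorem foster_coefficient_diagonal (G : WGraph) (hG : G.Connected) (e : G.E)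
    (β : G.E → ℝ) (hcyc : G.IsCycle β)
    (horth : ∀ γ : G.E → ℝ, G.IsCycle γ →
      G.ip (fun j => (if j = e then (1 : ℝ) else 0) - β j) γ = 0) :
    IsGreatest (Set.range fun j => |β j|) (β e) ∧
    β e = (1 / G.wG) *
      ∑ T : Finset G.E, if G.IsSpanningTree T ∧ e ∉ T then G.wt T else 0 := by
  have : Nonempty G.V := ⟨G.tail e⟩
  have hwG := hG.wG_pos.ne'
  obtain rfl : β = G.kirchhoffChain e :=
    WGraph.eq_of_forall_ip_sub_eq_zero (WGraph.mem_cycles.2 hcyc)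
      (WGraph.kirchhoffChain_mem_cycles e)
      (fun γ hγ => horth γ (WGraph.mem_cycles.1 hγ))
      (fun γ hγ => WGraph.ip_sub_kirchhoffChain hwG e hγ)
  have hle := WGraph.abs_kirchhoffChain_le (G := G) e
  refine ⟨⟨⟨e, abs_of_nonneg ((abs_nonneg _).trans (hle e))⟩, ?_⟩,
    WGraph.kirchhoffChain_apply_self e⟩
  rintro _ ⟨j, rfl⟩
  exact hle j
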